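/- Let 1 → N → G → Q → 1 be a group extension, i.e., let p : G → Q be a surjective group homomorphism with kernel N. Suppose that every finitely generated subgroup of Q is finitely presented, and that for every finitely generated subgroup H of G the intersection N ∩ H is finitely presented. Then every finitely generated subgroup of G is finitely presented. (This is the case (n,m) = (1,2) of the Remark strengthening part (i) of the extension inheritance lemma: instead of assuming N is (0,2)-coherent, it suffices that the intersection of any finitely generated subgroup of G with N is finitely presented.) -/

import Mathlib

/-- A group is finitely presented if it admits a presentation with finitely many
generators and finitely many relations. -/
def Group.FinitelyPresented (G : Type*) [Group G] : Prop :=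
  ∃ (n : ℕ) (rels : Finset (FreeGroup (Fin n))),
    Nonempty (G ≃* PresentedGroup (rels : Set (FreeGroup (Fin n))))

/-!
Restricting `p` to a finitely generated `H ≤ G` gives an extension `1 → N ⊓ H → H → p(H) → 1`
whose kernel is finitely presented by hypothesis and whose quotient is finitely presented, being
a finitely generated subgroup of `Q`. So it suffices that an extension `1 → M → G → K → 1` of
finitely presented groups is finitely presented. Let `F` be free on lifts to `G` of generators
of `K` and map `M ∗ F` onto `G`. Take as relators those of `K`, read in `F` and corrected by
elements of `M`, and the rules for conjugating generators of `M` by the generators of `F` and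
their inverses. Modulo these the image of `M` is normal with quotient presented by the relators
of `K`; since `M` embeds in `G`, the relators normally generate the whole kernel.
-/

open Subgroup Monoid.Coprod Pointwise

theorem Group.finitelyPresented_iff_isFinitelyPresented (G : Type*) [Group G] :
    Group.FinitelyPresented G ↔ Group.IsFinitelyPresented G := by
  constructor
  · rintro ⟨n, rels, ⟨e⟩⟩
    exact .equiv e.symm
  · intro h
    obtain ⟨n, rels, hrels, ⟨e⟩⟩ := h.exists_mulEquiv_presentedGroup
    refine ⟨n, hrels.toFinset, ⟨?_⟩⟩
    rwa [hrels.coe_toFinset]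

theorem Group.IsFinitelyPresented.fg (G : Type*) [Group G] [h : Group.IsFinitelyPresented G] :
    Group.FG G := by
  obtain ⟨n, φ, hφ, -⟩ := h.out
  exact Group.fg_of_surjective hφ

namespace Subgroup

variable {E : Type*} [Group E]

theorem le_of_le_sup_of_inf_le {A K R : Subgroup E} [R.Normal] (hRK : R ≤ K)
    (hK : K ≤ A ⊔ R) (hAK : A ⊓ K ≤ R) : K ≤ R := by
  intro x hx
  obtain ⟨a, ha, r, hr, rfl⟩ : x ∈ (A : Set E) * R := mul_normal A R ▸ hK hx
  have haK : a ∈ K := (K.mul_mem_cancel_right (hRK hr)).1 hx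
  exact R.mul_mem (hAK ⟨ha, haK⟩) hr

theorem normal_of_forall_conj_mem {L : Subgroup E} {S : Set E} (hS : closure S = ⊤)
    (h : ∀ s ∈ S ∪ S⁻¹, ∀ l ∈ L, s * l * s⁻¹ ∈ L) : L.Normal := by
  rw [← normalizer_eq_top_iff, eq_top_iff, ← hS, closure_le]
  intro s hs
  refine mem_normalizer_iff.2 fun l => ⟨h s (.inl hs) l, fun hl => ?_⟩
  simpa [mul_assoc] using h s⁻¹ (.inr (by simpa using hs)) _ hl

theorem conj_mem_closure_sup {S : Set E} {R : Subgroup E} [hR : R.Normal] {s : E}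
    (h : ∀ x ∈ S, s * x * s⁻¹ ∈ closure S ⊔ R) :
    ∀ l ∈ closure S ⊔ R, s * l * s⁻¹ ∈ closure S ⊔ R := by
  have : closure S ⊔ R ≤ (closure S ⊔ R).comap (MulAut.conj s).toMonoidHom :=
    sup_le ((closure_le _).2 h) fun r hr => mem_sup_right (hR.conj_mem r hr s)
  exact fun l hl => this hl

end Subgroup

namespace Monoid.Coprod

variable {M H K : Type*} [Group M] [Group H] [Group K]

theorem ker_snd : (snd : M ∗ H →* H).ker = normalClosure (Set.range inl) := by
  set L := normalClosure (Set.range (inl : M →* M ∗ H))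
  refine le_antisymm (fun x hx => ?_) (normalClosure_le_normal ?_)
  · have hinl : ∀ m, ((inl m : M ∗ H) : (M ∗ H) ⧸ L) = 1 := fun m =>
      (QuotientGroup.eq_one_iff _).2 (subset_normalClosure (Set.mem_range_self m))
    have : (QuotientGroup.mk' L).comp (inr.comp snd) = QuotientGroup.mk' L :=
      hom_ext (MonoidHom.ext fun m => by simpa using (hinl m).symm) rfl
    rw [← QuotientGroup.ker_mk' L, MonoidHom.mem_ker, ← this]
    simp [(MonoidHom.mem_ker).1 hx]
  · rintro _ ⟨m, rfl⟩
    simp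

theorem ker_comp_snd {ψ : H →* K} {R : Set H} (hψ : ψ.ker = normalClosure R) :
    (ψ.comp (snd : M ∗ H →* H)).ker = normalClosure (Set.range inl ∪ inr '' R) := by
  have hR : normalClosure R = (normalClosure (inr '' R : Set (M ∗ H))).map snd := by
    rw [map_normalClosure _ (snd : M ∗ H →* H) snd_surjective, Set.image_image]
    simp
  rw [← MonoidHom.comap_ker, hψ, hR, comap_map_eq, ker_snd, normalClosure_union, sup_comm]

theorem lift_ker_subtype_surjective {G : Type*} [Group G] (f : G →* K) (τ : H →* G)
    (h : Function.Surjective (f.comp τ)) : Function.Surjective (lift f.ker.subtype τ) := by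
  intro g
  obtain ⟨w, hw⟩ := h (f g)
  have hm : (τ w)⁻¹ * g ∈ f.ker := by simp [← hw]
  exact ⟨inr w * inl ⟨_, hm⟩, by simp⟩

theorem normal_range_inl_sup {S : Set M} (hS : closure S = ⊤) {Y : Set H}
    (hY : closure Y = ⊤) (R : Subgroup (M ∗ H)) [R.Normal]
    (h : ∀ y ∈ Y ∪ Y⁻¹, ∀ m ∈ S,
      inr y * inl m * (inr y)⁻¹ ∈ (inl : M →* M ∗ H).range ⊔ R) :
    ((inl : M →* M ∗ H).range ⊔ R).Normal := by
  set L := (inl : M →* M ∗ H).range ⊔ R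
  have hA : (inl : M →* M ∗ H).range = closure (inl '' S) := by
    rw [MonoidHom.range_eq_map, ← hS, MonoidHom.map_closure]
  have hgen : closure (Set.range (inl : M →* M ∗ H) ∪ inr '' Y) = ⊤ := by
    rw [Subgroup.closure_union, ← MonoidHom.map_closure, hY, ← MonoidHom.range_eq_map,
      ← MonoidHom.coe_range, closure_eq, range_inl_sup_range_inr]
  have hinl : ∀ s ∈ L, ∀ l ∈ L, s * l * s⁻¹ ∈ L := fun s hs l hl =>
    L.mul_mem (L.mul_mem hs hl) (L.inv_mem hs)
  have hinr : ∀ y ∈ Y ∪ Y⁻¹, ∀ l ∈ L, inr y * l * (inr y)⁻¹ ∈ L := fun y hy => by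
    simp only [L, hA] at h ⊢
    exact conj_mem_closure_sup (by rintro _ ⟨m, hm, rfl⟩; exact h y hy m hm)
  refine normal_of_forall_conj_mem hgen ?_
  rintro s ((⟨m, rfl⟩ | ⟨y, hy, rfl⟩) | (⟨m, hm⟩ | ⟨y, hy, hys⟩))
  · exact hinl _ (mem_sup_left ⟨m, rfl⟩)
  · exact hinr y (.inl hy)
  · exact hinl _ (inv_inv s ▸ L.inv_mem (mem_sup_left ⟨m, hm⟩))
  · rw [← inv_inv s, ← hys, ← map_inv]
    exact hinr _ (.inr (by simpa using hy))

theorem ker_eq_of_conj_mem_sup {G : Type*} [Group G] {π : M ∗ H →* G}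
    (hπ : Function.Injective (π.comp inl)) {f : G →* K} {ψ : H →* K}
    (hfπ : f.comp π = ψ.comp snd)
    {RK : Set H} (hψ : ψ.ker = normalClosure RK) {S : Set M} (hS : closure S = ⊤) {Y : Set H}
    (hY : closure Y = ⊤) {R : Subgroup (M ∗ H)} [R.Normal] (hRπ : R ≤ π.ker)
    (hRK : ∀ r ∈ RK, inr r ∈ (inl : M →* M ∗ H).range ⊔ R)
    (hconj : ∀ y ∈ Y ∪ Y⁻¹, ∀ m ∈ S,
      inr y * inl m * (inr y)⁻¹ ∈ (inl : M →* M ∗ H).range ⊔ R) :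
    π.ker = R := by
  set L := (inl : M →* M ∗ H).range ⊔ R
  have : L.Normal := normal_range_inl_sup hS hY R hconj
  have hπL : π.ker ≤ L := calc
    π.ker ≤ (f.comp π).ker := fun x hx => by simp [(MonoidHom.mem_ker).1 hx]
    _ = normalClosure (Set.range inl ∪ inr '' RK) := by rw [hfπ, ker_comp_snd hψ]
    _ ≤ L := by
      refine normalClosure_le_normal (Set.union_subset ?_ ?_)
      · rintro _ ⟨m, rfl⟩
        exact mem_sup_left ⟨m, rfl⟩
      · rintro _ ⟨r, hr, rfl⟩
        exact hRK r hr
  have hinl : (inl : M →* M ∗ H).range ⊓ π.ker ≤ R := by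
    rintro _ ⟨⟨m, rfl⟩, hm⟩
    simp [hπ.eq_iff' (map_one _) |>.1 hm]
  exact le_antisymm (le_of_le_sup_of_inf_le hRπ hπL hinl) hRπ

end Monoid.Coprod

namespace Group.IsFinitelyPresented

theorem of_ker_of_surjective {G K : Type*} [Group G] [Group K] (f : G →* K)
    (hf : Function.Surjective f) [IsFinitelyPresented f.ker] [hK : IsFinitelyPresented K] :
    IsFinitelyPresented G := by
  obtain ⟨b, φ, hφ, RK, hRK, hφker⟩ := hK.out
  obtain ⟨S, hS, hSfin⟩ := Group.fg_iff.1 (IsFinitelyPresented.fg f.ker)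
  choose t ht using fun j => hf (φ (FreeGroup.of j))
  set τ : FreeGroup (Fin b) →* G := FreeGroup.lift t
  have hfτ : f.comp τ = φ := FreeGroup.ext_hom _ _ (by simp [τ, ht])
  set π : f.ker ∗ FreeGroup (Fin b) →* G := lift f.ker.subtype τ
  have hfπ : f.comp π = φ.comp snd := hom_ext
    (by ext m; simpa [π] using MonoidHom.mem_ker.1 m.2) (by rw [MonoidHom.comp_assoc]; simpa [π])
  set Y := Set.range (FreeGroup.of : Fin b → FreeGroup (Fin b))
  set X : Set (f.ker ∗ FreeGroup (Fin b)) :=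
    inr '' RK ∪ Set.image2 (fun y m => inr y * inl m * (inr y)⁻¹) (Y ∪ Y⁻¹) S
  have hXfin : X.Finite :=
    (hRK.image _).union (((Set.finite_range _).union (Set.finite_range _).inv).image2 _ hSfin)
  have hX : X ⊆ f.ker.comap π := by
    rintro _ (⟨r, hr, rfl⟩ | ⟨y, -, m, -, rfl⟩)
    · have : r ∈ φ.ker := hφker ▸ subset_normalClosure hr
      simpa [π, ← hfτ] using this
    · simpa [π] using MonoidHom.mem_ker.1 m.2
  have : Finite X := hXfin.to_subtype
  set T := Set.range fun e : X => (e : f.ker ∗ FreeGroup (Fin b)) * (inl ⟨π e, hX e.2⟩)⁻¹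
  have hTπ : T ⊆ π.ker := by
    rintro _ ⟨e, rfl⟩
    simp [π]
  set L : Subgroup (f.ker ∗ FreeGroup (Fin b)) := inl.range ⊔ normalClosure T
  have hXL : ∀ e ∈ X, e ∈ L := fun e he => by
    refine (L.mul_mem_cancel_right (inv_mem (mem_sup_left ⟨⟨π e, hX he⟩, rfl⟩))).1 ?_
    exact mem_sup_right (subset_normalClosure ⟨⟨e, he⟩, rfl⟩)
  have hπinl : Function.Injective (π.comp inl) := by simp [π]
  have hker : π.ker = normalClosure T :=
    ker_eq_of_conj_mem_sup hπinl hfπ hφker.symm hS (FreeGroup.closure_range_of _)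
      (normalClosure_le_normal hTπ) (fun r hr => hXL _ (.inl ⟨r, hr, rfl⟩))
      fun y hy m hm => hXL _ (.inr ⟨y, hy, m, hm, rfl⟩)
  exact .of_surjective π (lift_ker_subtype_surjective f τ (hfτ ▸ hφ))
    ⟨T, Set.finite_range _, hker.symm⟩

end Group.IsFinitelyPresented

theorem coherent_of_group_extension_of_intersections_fp_general {G Q : Type*} [Group G] [Group Q]
    (p : G →* Q) (N : Subgroup G) (hN : N = p.ker)
    (hQ : ∀ K : Subgroup Q, K.FG → Group.FinitelyPresented K)
    (hint : ∀ H : Subgroup G, H.FG → Group.FinitelyPresented ↥(N ⊓ H)) :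
    ∀ H : Subgroup G, H.FG → Group.FinitelyPresented H := by
  intro H hH
  have : Group.FG H := (Group.fg_iff_subgroup_fg H).2 hH
  have hker : (N ⊓ H).subgroupOf H = (p.subgroupMap H).ker := by
    rw [ker_subgroupMap, inf_subgroupOf_right, hN]
  have : Group.IsFinitelyPresented (p.subgroupMap H).ker :=
    .equiv ((subgroupOfEquivOfLe inf_le_right).symm.trans (MulEquiv.subgroupCongr hker))
      (h := (Group.finitelyPresented_iff_isFinitelyPresented _).1 (hint H hH))
  have : Group.IsFinitelyPresented (H.map p) :=
    (Group.finitelyPresented_iff_isFinitelyPresented _).1 <| hQ _ <|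
      (Group.fg_iff_subgroup_fg _).1 (Group.fg_of_surjective (p.subgroupMap_surjective H))
  exact (Group.finitelyPresented_iff_isFinitelyPresented H).2 <|
    .of_ker_of_surjective (p.subgroupMap H) (p.subgroupMap_surjective H)

/-- Strengthened extension inheritance for coherence, case (n,m) = (1,2):
if `p : G → Q` is a surjective group homomorphism with kernel `N`, every finitely
generated subgroup of `Q` is finitely presented, and the intersection of `N` with any
finitely generated subgroup `H` of `G` is finitely presented, then every finitely
generated subgroup of `G` is finitely presented. -/
theorem coherent_of_group_extension_of_intersections_fp {G Q : Type*} [Group G] [Group Q]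
    (p : G →* Q) (hp : Function.Surjective p) (N : Subgroup G) (hN : N = p.ker)
    (hQ : ∀ K : Subgroup Q, K.FG → Group.FinitelyPresented K)
    (hint : ∀ H : Subgroup G, H.FG → Group.FinitelyPresented ↥(N ⊓ H)) :
    ∀ H : Subgroup G, H.FG → Group.FinitelyPresented H :=
  coherent_of_group_extension_of_intersections_fp_general p N hN hQ hint
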